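/- arXiv:2503.04425 — 4 statements merged into one kernel-verified Lean document; each statement's English description precedes it below -/
import Mathlib

section
/- Let η : ℝ → ℝ be three times continuously differentiable with η(0) = η'(0) = η''(0) = 0. Then for all a, b, c ∈ ℝ: η(a+c) − η(a+b) − η'(a)(c−b) = (c−b) ∫₀¹∫₀¹∫₀¹ (b + x(c−b)) · (a + y(b + x(c−b))) · η'''(z (a + y(b + x(c−b)))) dz dy dx. -/
/-!
Each of the three integrals is the fundamental theorem of calculus along a segment,
`∫₀¹ t f'(p + z t) dz = f(p + t) - f(p)`: the `z`-integral turns `η'''` into `η''` (this is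
where `η''(0) = 0` enters), the `y`-integral gives `η'(a + s) - η'(a)` with `s = b + x(c - b)`,
and the `x`-integral of `(c - b) η'(a + s)` is `η(a + c) - η(a + b)`.
-/

theorem integral_smul_deriv_comp_add_mul {E : Type*} [NormedAddCommGroup E] [NormedSpace ℝ E]
    [CompleteSpace E] {f : ℝ → E} (hf : ContDiff ℝ 1 f) (p t : ℝ) :
    ∫ z in (0:ℝ)..1, t • deriv f (p + z * t) = f (p + t) - f p := by
  have hderiv (z : ℝ) : HasDerivAt (fun z => f (p + z * t)) (t • deriv f (p + z * t)) z := by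
    have hline : HasDerivAt (fun z : ℝ => p + z * t) t z := by
      simpa using ((hasDerivAt_id z).mul_const t).const_add p
    exact ((hf.differentiable one_ne_zero _).hasDerivAt).scomp z hline
  have hcont : Continuous fun z : ℝ => t • deriv f (p + z * t) :=
    continuous_const.smul ((hf.continuous_deriv le_rfl).comp (by fun_prop))
  simpa using intervalIntegral.integral_eq_sub_of_hasDerivAt (fun z _ => hderiv z)
    (hcont.intervalIntegrable 0 1)

theorem stmt_6_general (η : ℝ → ℝ) (hη : ContDiff ℝ 3 η)
    (h2 : deriv (deriv η) 0 = 0) (a b c : ℝ) :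
    η (a+c) - η (a+b) - deriv η a * (c-b) =
      (c-b) * ∫ x in (0:ℝ)..1, ∫ y in (0:ℝ)..1, ∫ z in (0:ℝ)..1,
        (b + x*(c-b)) * (a + y*(b + x*(c-b)))
          * iteratedDeriv 3 η (z*(a + y*(b + x*(c-b)))) := by
  have hη₀ : ContDiff ℝ 1 η := hη.of_le (by norm_num)
  have hη₁ : ContDiff ℝ 1 (deriv η) := ContDiff.iterate_deriv' 1 1 (hη.of_le (by norm_num))
  have hη₂ : ContDiff ℝ 1 (deriv (deriv η)) := ContDiff.iterate_deriv' 1 2 hη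
  have inner (s u : ℝ) : ∫ z in (0:ℝ)..1, s * u * iteratedDeriv 3 η (z * u)
      = s * deriv (deriv η) u := by
    simpa [iteratedDeriv_eq_iterate, mul_assoc, h2] using
      congrArg (s * ·) (integral_smul_deriv_comp_add_mul hη₂ 0 u)
  have middle (s : ℝ) : ∫ y in (0:ℝ)..1, s * deriv (deriv η) (a + y * s)
      = deriv η (a + s) - deriv η a :=
    integral_smul_deriv_comp_add_mul hη₁ a s
  have outer : (c - b) * ∫ x in (0:ℝ)..1, deriv η (a + (b + x * (c - b)))
      = η (a + c) - η (a + b) := by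
    simpa [← intervalIntegral.integral_const_mul, add_assoc] using
      integral_smul_deriv_comp_add_mul hη₀ (a + b) (c - b)
  have hcont : Continuous fun x : ℝ => deriv η (a + (b + x * (c - b))) :=
    hη₁.continuous.comp (by fun_prop)
  simp only [inner, middle]
  rw [intervalIntegral.integral_sub (hcont.intervalIntegrable 0 1) intervalIntegrable_const,
    intervalIntegral.integral_const, mul_sub (c - b), outer, sub_zero, one_smul]
  ring

/-- the trilinear integral identity (equation (3.3)) for a C³ function η with
η(0) = η'(0) = η''(0) = 0. -/
theorem stmt_6 (η : ℝ → ℝ) (hη : ContDiff ℝ 3 η)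
    (h0 : η 0 = 0) (h1 : deriv η 0 = 0) (h2 : deriv (deriv η) 0 = 0) (a b c : ℝ) :
    η (a+c) - η (a+b) - deriv η a * (c-b) =
      (c-b) * ∫ x in (0:ℝ)..1, ∫ y in (0:ℝ)..1, ∫ z in (0:ℝ)..1,
        (b + x*(c-b)) * (a + y*(b + x*(c-b)))
          * iteratedDeriv 3 η (z*(a + y*(b + x*(c-b)))) :=
  stmt_6_general η hη h2 a b c
end

section
/- Let r₀ ∈ ℝ, let b, c : [r₀,∞) → ℝ be continuous, and suppose v ∈ C²([r₀,∞)) satisfies v''(r) + b(r) v'(r) + c(r) v(r) = 0 for all r ≥ r₀, where there exist constants C > 0 and γ > 1/2 such that |b(r) − 3| ≤ C e^{−2r} and |c(r) − 2| ≤ C e^{−2γ r} for all r ≥ r₀. Then there exist real numbers L₁, L₂ such that e^r v(r) → L₁, e^r v'(r) → −L₁ and e^{2r}(v(r) + v'(r)) → L₂ as r → ∞; in particular there is C' > 0 with |v(r)| ≤ C' e^{−r}, |v'(r)| ≤ C' e^{−r} and |v(r) + v'(r)| ≤ C' e^{−2r} for all r ≥ r₀. -/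
open Real Set Filter

/-! Write the equation as `v'' + 3 v' + 2 v = f` with `f = (3 - b) v' + (2 - c) v`, which is
`O(e^{-(1+ε) r} (|v| + |v'|))` for some `ε > 0`. The coefficients `c₁ = e^r (v' + 2 v)` and
`c₂ = e^{2r} (v + v')` of the two modes satisfy `c₁' = e^r f` and `c₂' = e^{2r} f`, so
`P = c₁² + c₂²` obeys `P' ≤ K e^{-ε r} P`, and the integrating factor `exp ((K / ε) e^{-ε r})` shows
that `P` stays bounded. Hence `c₁'` and `c₂'` are `O(e^{-ε r})`, thus integrable, and `c₁`, `c₂`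
converge; `v` and `v'` are recovered from `e^r v = c₁ - e^{-r} c₂` and `e^r v' = 2 e^{-r} c₂ - c₁`.
The uniform bounds follow from these limits and continuity on `[r₀, ∞)`. -/

open MeasureTheory Topology

theorem le_mul_exp_of_hasDerivWithinAt_le_mul_exp {P P' : ℝ → ℝ} {a K ε : ℝ} (hK : 0 ≤ K)
    (hε : 0 < ε) (hP : ∀ r ≥ a, HasDerivWithinAt P (P' r) (Ici a) r) (hP₀ : ∀ r ≥ a, 0 ≤ P r)
    (hP' : ∀ r ≥ a, P' r ≤ K * exp (-ε * r) * P r) (r : ℝ) (hr : a ≤ r) :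
    P r ≤ P a * exp (K / ε * exp (-ε * a)) := by
  set E : ℝ → ℝ := fun r => exp (K / ε * exp (-ε * r))
  have hE : ∀ r, HasDerivAt E (-(K * exp (-ε * r)) * E r) r := by
    intro r
    refine ((((hasDerivAt_id r).const_mul (-ε)).exp).const_mul (K / ε)).exp.congr_deriv ?_
    simp only [E, id]
    field_simp
  have hanti : AntitoneOn (fun r => P r * E r) (Ici a) := by
    refine antitoneOn_of_hasDerivWithinAt_nonpos (convex_Ici a)
      (f' := fun x => P' x * E x + P x * (-(K * exp (-ε * x)) * E x))
      (fun x hx => ((hP x hx).mul (hE x).hasDerivWithinAt).continuousWithinAt) ?_ ?_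
    · rw [interior_Ici]
      exact fun x hx => ((hP x hx.le).mul (hE x).hasDerivWithinAt).mono Ioi_subset_Ici_self
    · rw [interior_Ici]
      intro x hx
      have hEx : 0 < E x := exp_pos _
      nlinarith [hP' x hx.le]
  calc P r ≤ P r * E r := le_mul_of_one_le_right (hP₀ r hr) (one_le_exp (by positivity))
    _ ≤ P a * E a := hanti (mem_Ici.2 le_rfl) hr hr

theorem exists_tendsto_of_hasDerivAt_of_abs_le_exp {F F' : ℝ → ℝ} {a A ε : ℝ} (hε : 0 < ε)
    (hF : ∀ x ∈ Ioi a, HasDerivAt F (F' x) x) (hF' : ∀ x ∈ Ioi a, |F' x| ≤ A * exp (-ε * x)) :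
    ∃ L, Tendsto F atTop (𝓝 L) := by
  have hmeas : AEStronglyMeasurable F' (volume.restrict (Ioi a)) := by
    refine (stronglyMeasurable_deriv F).aestronglyMeasurable.congr ?_
    filter_upwards [ae_restrict_mem measurableSet_Ioi] with x hx
    exact (hF x hx).deriv
  have hint : IntegrableOn F' (Ioi a) := by
    refine ((exp_neg_integrableOn_Ioi a hε).const_mul A).mono' hmeas ?_
    filter_upwards [ae_restrict_mem measurableSet_Ioi] with x hx
    exact hF' x hx
  exact ⟨_, tendsto_limUnder_of_hasDerivAt_of_integrableOn_Ioi hF hint⟩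

theorem exists_pos_abs_le_of_continuousOn_Ici_of_tendsto {f : ℝ → ℝ} {a L : ℝ}
    (hf : ContinuousOn f (Ici a)) (hL : Tendsto f atTop (𝓝 L)) : ∃ M > 0, ∀ x ≥ a, |f x| ≤ M := by
  obtain ⟨N, hN⟩ := eventually_atTop.1 (hL.abs.eventually (gt_mem_nhds (lt_add_one |L|)))
  obtain ⟨M, hM⟩ :=
    isCompact_Icc.exists_bound_of_continuousOn (hf.mono (Icc_subset_Ici_self : Icc a N ⊆ Ici a))
  refine ⟨max M (|L| + 1), lt_max_of_lt_right (by positivity), fun x hx => ?_⟩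
  rcases le_total x N with h | h
  · exact (hM x ⟨hx, h⟩).trans (le_max_left _ _)
  · exact (hN x h).le.trans (le_max_right _ _)

theorem abs_mul_add_mul_le {p q x y B : ℝ} (hp : |p| ≤ B) (hq : |q| ≤ B) :
    |p * x + q * y| ≤ B * (|x| + |y|) := by
  calc |p * x + q * y| ≤ |p| * |x| + |q| * |y| := by
        rw [← abs_mul, ← abs_mul]; exact abs_add_le _ _
    _ ≤ B * |x| + B * |y| := by gcongr
    _ = B * (|x| + |y|) := by ring

theorem abs_le_mul_exp_neg {t y M : ℝ} (h : |exp t * y| ≤ M) : |y| ≤ M * exp (-t) := by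
  rw [abs_mul, abs_of_pos (exp_pos t)] at h
  rw [exp_neg, le_mul_inv_iff₀ (exp_pos t)]
  linarith

theorem hasDerivWithinAt_exp_const_mul_mul {y : ℝ → ℝ} {y' k r : ℝ} {s : Set ℝ}
    (h : HasDerivWithinAt y y' s r) :
    HasDerivWithinAt (fun t => exp (k * t) * y t) (exp (k * r) * (y' + k * y r)) s r := by
  refine ((((hasDerivAt_id r).const_mul k).exp.hasDerivWithinAt (s := s)).mul h).congr_deriv ?_
  simp only [id]
  ring

/-- For a solution `α e^{-r} + β e^{-2r}` of `v'' + 3 v' + 2 v = 0`, `expCoeff₁` is constantly `α`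
and `expCoeff₂` constantly `-β`. -/
noncomputable def expCoeff₁ (v v' : ℝ → ℝ) (r : ℝ) : ℝ := exp r * (v' r + 2 * v r)

noncomputable def expCoeff₂ (v v' : ℝ → ℝ) (r : ℝ) : ℝ := exp (2 * r) * (v r + v' r)

section PerturbedODE

variable {v v' f : ℝ → ℝ} {a K ε r : ℝ}

theorem hasDerivWithinAt_expCoeff₁ {s : Set ℝ} (hv : HasDerivWithinAt v (v' r) s r)
    (hv' : HasDerivWithinAt v' (f r - 3 * v' r - 2 * v r) s r) :
    HasDerivWithinAt (expCoeff₁ v v') (exp r * f r) s r := by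
  have := hasDerivWithinAt_exp_const_mul_mul (k := 1) (hv'.add (hv.const_mul 2))
  simp only [one_mul] at this
  exact this.congr_deriv (by simp only [Pi.add_apply]; ring)

theorem hasDerivWithinAt_expCoeff₂ {s : Set ℝ} (hv : HasDerivWithinAt v (v' r) s r)
    (hv' : HasDerivWithinAt v' (f r - 3 * v' r - 2 * v r) s r) :
    HasDerivWithinAt (expCoeff₂ v v') (exp (2 * r) * f r) s r :=
  (hasDerivWithinAt_exp_const_mul_mul (k := 2) (hv.add hv')).congr_deriv
    (by simp only [Pi.add_apply]; ring)

theorem exp_mul_eq_expCoeff : exp r * v r = expCoeff₁ v v' r - exp (-r) * expCoeff₂ v v' r := by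
  simp only [expCoeff₁, expCoeff₂, exp_neg, two_mul, exp_add]
  field_simp
  ring

theorem exp_mul_deriv_eq_expCoeff :
    exp r * v' r = 2 * exp (-r) * expCoeff₂ v v' r - expCoeff₁ v v' r := by
  simp only [expCoeff₁, expCoeff₂, exp_neg, two_mul, exp_add]
  field_simp
  ring

theorem exp_mul_abs_add_abs_le (hr : 0 ≤ r) :
    exp r * (|v r| + |v' r|) ≤ 3 * (|expCoeff₁ v v' r| + |expCoeff₂ v v' r|) := by
  have he : exp (-r) ≤ 1 := exp_le_one_iff.2 (by linarith)
  have h₁ : exp r * |v r| ≤ |expCoeff₁ v v' r| + |expCoeff₂ v v' r| := by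
    rw [← abs_of_pos (exp_pos r), ← abs_mul, exp_mul_eq_expCoeff (v' := v')]
    refine (abs_sub _ _).trans ?_
    rw [abs_mul, abs_of_pos (exp_pos _)]
    gcongr
    exact mul_le_of_le_one_left (abs_nonneg _) he
  have h₂ : exp r * |v' r| ≤ 2 * |expCoeff₂ v v' r| + |expCoeff₁ v v' r| := by
    rw [← abs_of_pos (exp_pos r), ← abs_mul, exp_mul_deriv_eq_expCoeff (v := v)]
    refine (abs_sub _ _).trans ?_
    rw [abs_mul, abs_mul, abs_two, abs_of_pos (exp_pos _)]
    gcongr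
    nlinarith [abs_nonneg (expCoeff₂ v v' r)]
  nlinarith [abs_nonneg (expCoeff₁ v v' r), abs_nonneg (expCoeff₂ v v' r)]

theorem abs_exp_two_mul_mul_le (hK : 0 ≤ K) (hr : 0 ≤ r)
    (hf : |f r| ≤ K * exp (-(1 + ε) * r) * (|v r| + |v' r|)) :
    |exp (2 * r) * f r| ≤ 3 * K * exp (-ε * r) * (|expCoeff₁ v v' r| + |expCoeff₂ v v' r|) := by
  have hsplit : exp (2 * r) * exp (-(1 + ε) * r) = exp (-ε * r) * exp r := by
    rw [← exp_add, ← exp_add]; ring_nf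
  calc |exp (2 * r) * f r| = exp (2 * r) * |f r| := by rw [abs_mul, abs_of_pos (exp_pos _)]
    _ ≤ exp (2 * r) * (K * exp (-(1 + ε) * r) * (|v r| + |v' r|)) := by gcongr
    _ = K * exp (-ε * r) * (exp r * (|v r| + |v' r|)) := by
        rw [← mul_assoc, mul_left_comm, hsplit]; ring
    _ ≤ K * exp (-ε * r) * (3 * (|expCoeff₁ v v' r| + |expCoeff₂ v v' r|)) := by
        gcongr K * exp (-ε * r) * ?_; exact exp_mul_abs_add_abs_le hr
    _ = _ := by ring

theorem exists_abs_expCoeff_le (ha : 0 ≤ a) (hK : 0 ≤ K) (hε : 0 < ε)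
    (hv : ∀ r ≥ a, HasDerivWithinAt v (v' r) (Ici a) r)
    (hv' : ∀ r ≥ a, HasDerivWithinAt v' (f r - 3 * v' r - 2 * v r) (Ici a) r)
    (hf : ∀ r ≥ a, |f r| ≤ K * exp (-(1 + ε) * r) * (|v r| + |v' r|)) :
    ∃ M, ∀ r ≥ a, |expCoeff₁ v v' r| ≤ M ∧ |expCoeff₂ v v' r| ≤ M := by
  set c₁ := expCoeff₁ v v'
  set c₂ := expCoeff₂ v v'
  have hP : ∀ r ≥ a, HasDerivWithinAt (fun r => c₁ r ^ 2 + c₂ r ^ 2)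
      (2 * c₁ r * (exp r * f r) + 2 * c₂ r * (exp (2 * r) * f r)) (Ici a) r := fun r hr =>
    (((hasDerivWithinAt_expCoeff₁ (hv r hr) (hv' r hr)).pow 2).add
      ((hasDerivWithinAt_expCoeff₂ (hv r hr) (hv' r hr)).pow 2)).congr_deriv (by ring)
  have hP' : ∀ r ≥ a, 2 * c₁ r * (exp r * f r) + 2 * c₂ r * (exp (2 * r) * f r)
      ≤ 12 * K * exp (-ε * r) * (c₁ r ^ 2 + c₂ r ^ 2) := by
    intro r hr
    have hr₀ : 0 ≤ r := ha.trans hr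
    have hF := abs_exp_two_mul_mul_le hK hr₀ (hf r hr)
    have hF₁ : |exp r * f r| ≤ |exp (2 * r) * f r| := by
      rw [abs_mul, abs_mul, abs_of_pos (exp_pos _), abs_of_pos (exp_pos _)]
      gcongr
      linarith
    have hE : 0 ≤ K * exp (-ε * r) := by positivity
    calc 2 * c₁ r * (exp r * f r) + 2 * c₂ r * (exp (2 * r) * f r)
        ≤ 2 * (|c₁ r| + |c₂ r|) * |exp (2 * r) * f r| := by
          nlinarith [le_abs_self (c₁ r * (exp r * f r)), abs_mul (c₁ r) (exp r * f r),
            le_abs_self (c₂ r * (exp (2 * r) * f r)), abs_mul (c₂ r) (exp (2 * r) * f r),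
            mul_le_mul_of_nonneg_left hF₁ (abs_nonneg (c₁ r))]
      _ ≤ 2 * (|c₁ r| + |c₂ r|) * (3 * K * exp (-ε * r) * (|c₁ r| + |c₂ r|)) := by gcongr
      _ ≤ 12 * K * exp (-ε * r) * (c₁ r ^ 2 + c₂ r ^ 2) := by
          nlinarith [mul_nonneg hE (sq_nonneg (|c₁ r| - |c₂ r|)), sq_abs (c₁ r), sq_abs (c₂ r)]
  set B := (c₁ a ^ 2 + c₂ a ^ 2) * exp (12 * K / ε * exp (-ε * a))
  have hB := le_mul_exp_of_hasDerivWithinAt_le_mul_exp (by positivity) hε hP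
    (fun r _ => by positivity) hP'
  refine ⟨√B, fun r hr => ⟨abs_le_sqrt ?_, abs_le_sqrt ?_⟩⟩ <;>
    nlinarith [hB r hr, sq_nonneg (c₁ r), sq_nonneg (c₂ r)]

theorem exists_tendsto_expCoeff (ha : 0 ≤ a) (hK : 0 ≤ K) (hε : 0 < ε)
    (hv : ∀ r ≥ a, HasDerivWithinAt v (v' r) (Ici a) r)
    (hv' : ∀ r ≥ a, HasDerivWithinAt v' (f r - 3 * v' r - 2 * v r) (Ici a) r)
    (hf : ∀ r ≥ a, |f r| ≤ K * exp (-(1 + ε) * r) * (|v r| + |v' r|)) :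
    ∃ L₁ L₂, Tendsto (expCoeff₁ v v') atTop (𝓝 L₁) ∧ Tendsto (expCoeff₂ v v') atTop (𝓝 L₂) := by
  obtain ⟨M, hM⟩ := exists_abs_expCoeff_le ha hK hε hv hv' hf
  have hdecay₂ : ∀ r ∈ Ioi a, |exp (2 * r) * f r| ≤ 6 * K * M * exp (-ε * r) := fun r hr => by
    have := abs_exp_two_mul_mul_le hK (ha.trans hr.le) (hf r hr.le)
    have hM₂ := mul_le_mul_of_nonneg_left (add_le_add (hM r hr.le).1 (hM r hr.le).2)
      (by positivity : 0 ≤ 3 * K * exp (-ε * r))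
    linarith
  have hdecay₁ : ∀ r ∈ Ioi a, |exp r * f r| ≤ 6 * K * M * exp (-ε * r) := fun r hr => by
    refine le_trans ?_ (hdecay₂ r hr)
    rw [abs_mul, abs_mul, abs_of_pos (exp_pos _), abs_of_pos (exp_pos _)]
    gcongr
    linarith [ha.trans hr.le]
  obtain ⟨L₁, h₁⟩ := exists_tendsto_of_hasDerivAt_of_abs_le_exp hε (fun r hr =>
    (hasDerivWithinAt_expCoeff₁ (hv r hr.le) (hv' r hr.le)).hasDerivAt (Ici_mem_nhds hr)) hdecay₁
  obtain ⟨L₂, h₂⟩ := exists_tendsto_of_hasDerivAt_of_abs_le_exp hε (fun r hr =>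
    (hasDerivWithinAt_expCoeff₂ (hv r hr.le) (hv' r hr.le)).hasDerivAt (Ici_mem_nhds hr)) hdecay₂
  exact ⟨L₁, L₂, h₁, h₂⟩

theorem exists_tendsto_of_perturbed_ode (ha : 0 ≤ a) (hK : 0 ≤ K) (hε : 0 < ε)
    (hv : ∀ r ≥ a, HasDerivWithinAt v (v' r) (Ici a) r)
    (hv' : ∀ r ≥ a, HasDerivWithinAt v' (f r - 3 * v' r - 2 * v r) (Ici a) r)
    (hf : ∀ r ≥ a, |f r| ≤ K * exp (-(1 + ε) * r) * (|v r| + |v' r|)) :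
    ∃ L₁ L₂, Tendsto (fun r => exp r * v r) atTop (𝓝 L₁) ∧
      Tendsto (fun r => exp r * v' r) atTop (𝓝 (-L₁)) ∧
      Tendsto (fun r => exp (2 * r) * (v r + v' r)) atTop (𝓝 L₂) := by
  obtain ⟨L₁, L₂, h₁, h₂⟩ := exists_tendsto_expCoeff ha hK hε hv hv' hf
  have h₀ : Tendsto (fun r => exp (-r) * expCoeff₂ v v' r) atTop (𝓝 0) := by
    simpa using tendsto_exp_neg_atTop_nhds_zero.mul h₂
  refine ⟨L₁, L₂, ?_, ?_, h₂⟩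
  · have h := h₁.sub h₀
    rw [sub_zero] at h
    exact h.congr fun r => exp_mul_eq_expCoeff.symm
  · have h := (h₀.const_mul 2).sub h₁
    rw [mul_zero, zero_sub] at h
    exact h.congr fun r => by rw [exp_mul_deriv_eq_expCoeff, mul_assoc]

end PerturbedODE

theorem stmt_11_general (r₀ : ℝ) (b c : ℝ → ℝ)
    (v v' v'' : ℝ → ℝ)
    (hv : ∀ r ≥ r₀, HasDerivWithinAt v (v' r) (Ici r₀) r)
    (hv' : ∀ r ≥ r₀, HasDerivWithinAt v' (v'' r) (Ici r₀) r)
    (hode : ∀ r ≥ r₀, v'' r + b r * v' r + c r * v r = 0)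
    (C γ : ℝ) (hC : 0 < C) (hγ : 1/2 < γ)
    (hbdecay : ∀ r ≥ r₀, |b r - 3| ≤ C * Real.exp (-2*r))
    (hcdecay : ∀ r ≥ r₀, |c r - 2| ≤ C * Real.exp (-2*γ*r)) :
    ∃ L₁ L₂ : ℝ,
      Tendsto (fun r => Real.exp r * v r) atTop (nhds L₁) ∧
      Tendsto (fun r => Real.exp r * v' r) atTop (nhds (-L₁)) ∧
      Tendsto (fun r => Real.exp (2*r) * (v r + v' r)) atTop (nhds L₂) ∧
      ∃ C' > (0:ℝ), ∀ r ≥ r₀,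
        |v r| ≤ C' * Real.exp (-r) ∧ |v' r| ≤ C' * Real.exp (-r) ∧
        |v r + v' r| ≤ C' * Real.exp (-2*r) := by
  set a := max r₀ 0
  set ε := min 1 (2 * γ - 1)
  have hε : 0 < ε := lt_min one_pos (by linarith)
  have hsub : Ici a ⊆ Ici r₀ := Ici_subset_Ici.2 (le_max_left _ _)
  have hf : ∀ r ≥ a, |(2 - c r) * v r + (3 - b r) * v' r| ≤
      C * exp (-(1 + ε) * r) * (|v r| + |v' r|) := fun r hr => by
    have hr0 : 0 ≤ r := (le_max_right _ _).trans hr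
    refine abs_mul_add_mul_le ?_ ?_ <;> rw [abs_sub_comm]
    · exact (hcdecay r (hsub hr)).trans (by gcongr; nlinarith [min_le_right 1 (2 * γ - 1)])
    · exact (hbdecay r (hsub hr)).trans (by gcongr; nlinarith [min_le_left 1 (2 * γ - 1)])
  obtain ⟨L₁, L₂, h₁, h₂, h₃⟩ := exists_tendsto_of_perturbed_ode (le_max_right _ _) hC.le hε
    (fun r hr => (hv r (hsub hr)).mono hsub)
    (fun r hr => ((hv' r (hsub hr)).mono hsub).congr_deriv (by linarith [hode r (hsub hr)])) hf
  have hvc : ContinuousOn v (Ici r₀) := fun r hr => (hv r hr).continuousWithinAt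
  have hv'c : ContinuousOn v' (Ici r₀) := fun r hr => (hv' r hr).continuousWithinAt
  obtain ⟨M₁, hM₁, hb₁⟩ := exists_pos_abs_le_of_continuousOn_Ici_of_tendsto
    (continuous_exp.continuousOn.mul hvc) h₁
  obtain ⟨M₂, hM₂, hb₂⟩ := exists_pos_abs_le_of_continuousOn_Ici_of_tendsto
    (continuous_exp.continuousOn.mul hv'c) h₂
  obtain ⟨M₃, hM₃, hb₃⟩ := exists_pos_abs_le_of_continuousOn_Ici_of_tendsto
    ((continuous_exp.comp (continuous_const_mul 2)).continuousOn.mul (hvc.add hv'c)) h₃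
  refine ⟨L₁, L₂, h₁, h₂, h₃, max M₁ (max M₂ M₃), by positivity, fun r hr => ⟨?_, ?_, ?_⟩⟩
  · exact (abs_le_mul_exp_neg (hb₁ r hr)).trans (by gcongr; exact le_max_left _ _)
  · exact (abs_le_mul_exp_neg (hb₂ r hr)).trans
      (by gcongr; exact le_max_of_le_right (le_max_left _ _))
  · rw [neg_mul]
    exact (abs_le_mul_exp_neg (hb₃ r hr)).trans
      (by gcongr; exact le_max_of_le_right (le_max_right _ _))

/-- asymptotics for second-order linear ODEs whose coefficients converge
exponentially to those of v'' + 3v' + 2v = 0: e^r v(r) and e^{2r}(v(r) + v'(r)) converge,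
with the corresponding exponential decay bounds. Here v', v'' denote the first and second
derivative of v on [r₀,∞) (one-sided at the endpoint). -/
theorem stmt_11 (r₀ : ℝ) (b c : ℝ → ℝ)
    (hb : ContinuousOn b (Ici r₀)) (hc : ContinuousOn c (Ici r₀))
    (v v' v'' : ℝ → ℝ)
    (hv : ∀ r ≥ r₀, HasDerivWithinAt v (v' r) (Ici r₀) r)
    (hv' : ∀ r ≥ r₀, HasDerivWithinAt v' (v'' r) (Ici r₀) r)
    (hv''cont : ContinuousOn v'' (Ici r₀))
    (hode : ∀ r ≥ r₀, v'' r + b r * v' r + c r * v r = 0)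
    (C γ : ℝ) (hC : 0 < C) (hγ : 1/2 < γ)
    (hbdecay : ∀ r ≥ r₀, |b r - 3| ≤ C * Real.exp (-2*r))
    (hcdecay : ∀ r ≥ r₀, |c r - 2| ≤ C * Real.exp (-2*γ*r)) :
    ∃ L₁ L₂ : ℝ,
      Tendsto (fun r => Real.exp r * v r) atTop (nhds L₁) ∧
      Tendsto (fun r => Real.exp r * v' r) atTop (nhds (-L₁)) ∧
      Tendsto (fun r => Real.exp (2*r) * (v r + v' r)) atTop (nhds L₂) ∧
      ∃ C' > (0:ℝ), ∀ r ≥ r₀,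
        |v r| ≤ C' * Real.exp (-r) ∧ |v' r| ≤ C' * Real.exp (-r) ∧
        |v r + v' r| ≤ C' * Real.exp (-2*r) :=
  stmt_11_general r₀ b c v v' v'' hv hv' hode C γ hC hγ hbdecay hcdecay
end

section
/- Let n ≥ 5 be an integer and let η : ℝ → ℝ be smooth with η(0) = η'(0) = η''(0) = 0 and sup_{x∈ℝ} |η'''(x)| < ∞. Suppose u ∈ C²((0,∞)) satisfies (1−ρ²) u''(ρ) + ((n−1)/ρ − 4ρ) u'(ρ) − 2 u(ρ) + (n−3)/ρ³ · η(ρ u(ρ)) = 0 for all ρ ∈ (0,∞), and that there exist C > 0 and γ > 1/2 with |u(ρ)| ≤ C ρ^{−γ} for all ρ ≥ 1. Then the limits lim_{ρ→∞} ρ u(ρ) and lim_{ρ→∞} ρ²(u(ρ) + ρ u'(ρ)) exist in ℝ, and there is C' > 0 such that |u(ρ)| ≤ C' ρ^{−1}, |u'(ρ)| ≤ C' ρ^{−2} and |u(ρ) + ρ u'(ρ)| ≤ C' ρ^{−2} for all ρ ≥ 1. -/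
/-!
With `w = ρ u`, the flux `g = ρ² w' = ρ² (u + ρ u')` satisfies the first-order linear equation
`g' = (ν - 5) / (ρ (ρ² - 1)) g + (ν - 3) (η w - w) / (ρ² - 1)`, whose integrating factor
`(1 - ρ⁻²) ^ ((5 - ν) / 2)` is bounded above and below on `[2, ∞)` and tends to `1`. As `η`
vanishes to third order, a decay `|u| ≲ ρ ^ (-κ)` with `κ ≤ 1` bounds the source by `ρ ^ (1 - 3κ)`.
For `1/2 < κ < 2/3` this gives `g = O(ρ ^ (2 - 3κ))`, so `w' = g / ρ²` is `O(ρ ^ (-3κ))`, hence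
integrable: `w` converges and `|u| ≲ ρ⁻¹`. Then `κ = 1` makes the source `O(ρ⁻²)`, so `g`
converges and `u + ρ u' = O(ρ⁻²)`, and `ρ u' = (u + ρ u') - u` gives `u' = O(ρ⁻²)`.
-/

open Real Set Filter Topology

theorem abs_le_mul_abs_pow_succ_of_abs_deriv_le {f : ℝ → ℝ} (hf : Differentiable ℝ f)
    (hf0 : f 0 = 0) {c : ℝ} {m : ℕ} (hf' : ∀ x, |deriv f x| ≤ c * |x| ^ m) (x : ℝ) :
    |f x| ≤ c * |x| ^ (m + 1) := by
  have hc : 0 ≤ c := by simpa using (abs_nonneg _).trans (hf' 1)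
  have hbound : ∀ y ∈ uIcc 0 x, ‖deriv f y‖ ≤ c * |x| ^ m := fun y hy =>
    (hf' y).trans (mul_le_mul_of_nonneg_left
      (pow_le_pow_left₀ (abs_nonneg y) (by simpa using abs_sub_left_of_mem_uIcc hy) m) hc)
  simpa [hf0, pow_succ, mul_assoc] using
    (convex_uIcc 0 x).norm_image_sub_le_of_norm_deriv_le (fun y _ => hf y) hbound
      left_mem_uIcc right_mem_uIcc

theorem abs_le_mul_abs_pow_three_of_iteratedDeriv_three_le {η : ℝ → ℝ} (hη : ContDiff ℝ 3 η)
    (h0 : η 0 = 0) (h1 : deriv η 0 = 0) (h2 : deriv (deriv η) 0 = 0) {B : ℝ}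
    (hB : ∀ x, |iteratedDeriv 3 η x| ≤ B) (x : ℝ) : |η x| ≤ B * |x| ^ 3 := by
  have hη₂ : ContDiff ℝ 1 (deriv (deriv η)) := hη.iterate_deriv' 1 2
  have hη₁ : ContDiff ℝ 2 (deriv η) := hη.iterate_deriv' 2 1
  have hB' : ∀ x, |deriv (deriv (deriv η)) x| ≤ B * |x| ^ 0 := by
    simpa [iteratedDeriv_succ] using hB
  refine abs_le_mul_abs_pow_succ_of_abs_deriv_le (hη.differentiable (by norm_num)) h0
    (abs_le_mul_abs_pow_succ_of_abs_deriv_le (hη₁.differentiable (by norm_num)) h1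
      (abs_le_mul_abs_pow_succ_of_abs_deriv_le (hη₂.differentiable one_ne_zero) h2 hB')) x

section DerivBounds

variable {F F' : ℝ → ℝ} {a M r : ℝ}

theorem abs_sub_le_of_abs_deriv_le_rpow (ha : 0 < a) (hr : r ≠ -1)
    (hF : ∀ s ≥ a, HasDerivAt F (F' s) s) (hF' : ∀ s ≥ a, |F' s| ≤ M * s ^ r)
    {x y : ℝ} (hx : a ≤ x) (hxy : x ≤ y) :
    |F y - F x| ≤ M * (y ^ (r + 1) - x ^ (r + 1)) / (r + 1) := by
  have hr₁ : r + 1 ≠ 0 := fun h => hr (by linarith)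
  have hB : ∀ t ∈ Icc x y,
      HasDerivAt (fun t => M * (t ^ (r + 1) - x ^ (r + 1)) / (r + 1)) (M * t ^ r) t := by
    intro t ht
    refine ((((hasDerivAt_rpow_const (p := r + 1) (Or.inl (by linarith [ht.1]))).sub_const
      (x ^ (r + 1))).const_mul M).div_const (r + 1)).congr_deriv ?_
    rw [add_sub_cancel_right]
    field_simp
  have hF_Icc : ∀ t ∈ Icc x y, HasDerivAt (fun t => F t - F x) (F' t) t :=
    fun t ht => (hF t (hx.trans ht.1)).sub_const _
  simpa using image_norm_le_of_norm_deriv_right_le_deriv_boundary'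
    (fun t ht => (hF_Icc t ht).continuousAt.continuousWithinAt)
    (fun t ht => (hF_Icc t (Ico_subset_Icc_self ht)).hasDerivWithinAt) (by simp)
    (fun t ht => (hB t ht).continuousAt.continuousWithinAt)
    (fun t ht => (hB t (Ico_subset_Icc_self ht)).hasDerivWithinAt)
    (fun t ht => hF' t (hx.trans ht.1)) (right_mem_Icc.2 hxy)

theorem nonneg_of_abs_le_mul_rpow (ha : 0 < a) (hF : ∀ s ≥ a, |F s| ≤ M * s ^ r) : 0 ≤ M :=
  nonneg_of_mul_nonneg_left ((abs_nonneg _).trans (hF a le_rfl)) (rpow_pos_of_pos ha r)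

theorem exists_abs_le_mul_rpow_of_abs_deriv_le_rpow (ha : 1 ≤ a) (hr : -1 < r)
    (hF : ∀ s ≥ a, HasDerivAt F (F' s) s) (hF' : ∀ s ≥ a, |F' s| ≤ M * s ^ r) :
    ∃ K, ∀ y ≥ a, |F y| ≤ K * y ^ (r + 1) := by
  have ha₀ : 0 < a := by linarith
  have hM := nonneg_of_abs_le_mul_rpow ha₀ hF'
  refine ⟨|F a| + M / (r + 1), fun y hy => ?_⟩
  have hsub := abs_sub_le_of_abs_deriv_le_rpow ha₀ hr.ne' hF hF' le_rfl hy
  have hy₁ : 1 ≤ y ^ (r + 1) := one_le_rpow (by linarith) (by linarith)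
  have ha₁ : 0 ≤ M * a ^ (r + 1) / (r + 1) :=
    div_nonneg (mul_nonneg hM (rpow_nonneg ha₀.le _)) (by linarith)
  calc |F y| ≤ |F a| + |F y - F a| := by simpa using abs_add_le (F a) (F y - F a)
    _ ≤ |F a| * y ^ (r + 1) + M / (r + 1) * y ^ (r + 1) := by
        rw [mul_sub, sub_div, mul_div_right_comm] at hsub
        nlinarith [abs_nonneg (F a)]
    _ = (|F a| + M / (r + 1)) * y ^ (r + 1) := by ring

theorem abs_sub_le_of_abs_deriv_le_rpow_of_lt (ha : 0 < a) (hr : r < -1)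
    (hF : ∀ s ≥ a, HasDerivAt F (F' s) s) (hF' : ∀ s ≥ a, |F' s| ≤ M * s ^ r)
    {x y : ℝ} (hx : a ≤ x) (hxy : x ≤ y) :
    |F y - F x| ≤ M * x ^ (r + 1) / -(r + 1) := by
  have hM := nonneg_of_abs_le_mul_rpow ha hF'
  have hy := rpow_nonneg (ha.le.trans (hx.trans hxy)) (r + 1)
  calc |F y - F x| ≤ M * (y ^ (r + 1) - x ^ (r + 1)) / (r + 1) :=
        abs_sub_le_of_abs_deriv_le_rpow ha hr.ne hF hF' hx hxy
    _ = M * (x ^ (r + 1) - y ^ (r + 1)) / -(r + 1) := by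
        rw [div_neg, ← neg_div, ← mul_neg, neg_sub]
    _ ≤ M * x ^ (r + 1) / -(r + 1) := by gcongr <;> linarith

theorem abs_le_of_abs_deriv_le_rpow (ha : 0 < a) (hr : r < -1)
    (hF : ∀ s ≥ a, HasDerivAt F (F' s) s) (hF' : ∀ s ≥ a, |F' s| ≤ M * s ^ r) {y : ℝ}
    (hy : a ≤ y) : |F y| ≤ |F a| + M * a ^ (r + 1) / -(r + 1) := by
  calc |F y| ≤ |F a| + |F y - F a| := by simpa using abs_add_le (F a) (F y - F a)
    _ ≤ _ := by gcongr; exact abs_sub_le_of_abs_deriv_le_rpow_of_lt ha hr hF hF' le_rfl hy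

theorem exists_tendsto_of_abs_deriv_le_rpow (ha : 0 < a) (hr : r < -1)
    (hF : ∀ s ≥ a, HasDerivAt F (F' s) s) (hF' : ∀ s ≥ a, |F' s| ≤ M * s ^ r) :
    ∃ L, Tendsto F atTop (𝓝 L) := by
  refine cauchySeq_tendsto_of_complete (Metric.cauchySeq_iff'.2 fun ε hε => ?_)
  have hlim : Tendsto (fun x => M * x ^ (r + 1) / -(r + 1)) atTop (𝓝 0) := by
    simpa using ((tendsto_rpow_neg_atTop (y := -(r + 1)) (by linarith)).const_mul M).div_const
      (-(r + 1))
  obtain ⟨N, hN⟩ :=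
    eventually_atTop.1 ((hlim.eventually (gt_mem_nhds hε)).and (eventually_ge_atTop a))
  exact ⟨N, fun n hn => (abs_sub_le_of_abs_deriv_le_rpow_of_lt ha hr hF hF' (hN N le_rfl).2
    hn).trans_lt (hN N le_rfl).1⟩

end DerivBounds

theorem rpow_le_max_one_rpow {a x : ℝ} (p : ℝ) (ha : 0 < a) (hx : x ∈ Icc a 1) :
    x ^ p ≤ max 1 (a ^ p) := by
  rcases le_total 0 p with hp | hp
  · exact (rpow_le_one (ha.le.trans hx.1) hx.2 hp).trans (le_max_left _ _)
  · exact (rpow_le_rpow_of_nonpos ha hx.1 hp).trans (le_max_right _ _)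

theorem one_sub_inv_sq_mem_Icc {ρ : ℝ} (hρ : 2 ≤ ρ) : 1 - (ρ ^ 2)⁻¹ ∈ Icc (3 / 4) 1 := by
  have : (ρ ^ 2)⁻¹ ≤ 1 / 4 := by
    rw [inv_le_comm₀ (by positivity) (by norm_num)]
    nlinarith
  constructor <;> [linarith; linarith [inv_nonneg.2 (sq_nonneg ρ)]]

theorem one_sub_inv_sq_pos {ρ : ℝ} (hρ : 1 < ρ) : 0 < 1 - (ρ ^ 2)⁻¹ := by
  have : (ρ ^ 2)⁻¹ < 1 := inv_lt_one_of_one_lt₀ (by nlinarith)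
  linarith

theorem exists_forall_ge_one_abs_le {f : ℝ → ℝ} (hf : ContinuousOn f (Icc 1 2)) {k : ℕ} {K : ℝ}
    (hK : ∀ ρ ≥ 2, |f ρ| ≤ K * (ρ ^ k)⁻¹) : ∃ C > 0, ∀ ρ ≥ 1, |f ρ| ≤ C * (ρ ^ k)⁻¹ := by
  obtain ⟨c, hc⟩ := isCompact_Icc.exists_bound_of_continuousOn hf
  refine ⟨max (max K (c * 2 ^ k)) 1, by positivity, fun ρ hρ => ?_⟩
  rcases le_total ρ 2 with hρ₂ | hρ₂
  · have hfc : |f ρ| ≤ c := by simpa using hc ρ ⟨hρ, hρ₂⟩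
    calc |f ρ| ≤ c * (2 ^ k * (ρ ^ k)⁻¹) := by
          refine hfc.trans (le_mul_of_one_le_right ((abs_nonneg _).trans hfc) ?_)
          rw [← div_eq_mul_inv, one_le_div (by positivity)]
          gcongr
      _ ≤ max (max K (c * 2 ^ k)) 1 * (ρ ^ k)⁻¹ := by
          rw [← mul_assoc]
          gcongr
          exact (le_max_right _ _).trans (le_max_left _ _)
  · exact (hK ρ hρ₂).trans (by gcongr; exact (le_max_left _ _).trans (le_max_left _ _))

theorem abs_le_of_abs_add_mul_le {ρ a b K₁ K₂ : ℝ} (hρ : 1 ≤ ρ) (ha : |a| ≤ K₁ * ρ⁻¹)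
    (hab : |a + ρ * b| ≤ K₂ * (ρ ^ 2)⁻¹) : |b| ≤ (K₁ + K₂) * (ρ ^ 2)⁻¹ := by
  have hρ₀ : 0 < ρ := by linarith
  have hK₂ : 0 ≤ K₂ := nonneg_of_mul_nonneg_left ((abs_nonneg _).trans hab) (by positivity)
  have ht : ρ⁻¹ ≤ 1 := inv_le_one_of_one_le₀ hρ
  have hb : ρ * |b| ≤ K₁ * ρ⁻¹ + K₂ * ρ⁻¹ ^ 2 := by
    calc ρ * |b| = |(a + ρ * b) - a| := by rw [add_sub_cancel_left, abs_mul, abs_of_pos hρ₀]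
      _ ≤ |a + ρ * b| + |a| := abs_sub _ _
      _ ≤ K₁ * ρ⁻¹ + K₂ * ρ⁻¹ ^ 2 := by rw [inv_pow]; linarith
  rw [← inv_pow]
  calc |b| = ρ⁻¹ * (ρ * |b|) := by field_simp
    _ ≤ ρ⁻¹ * (K₁ * ρ⁻¹ + K₂ * ρ⁻¹ ^ 2) := by gcongr
    _ = K₁ * ρ⁻¹ ^ 2 + K₂ * ρ⁻¹ ^ 2 * ρ⁻¹ := by ring
    _ ≤ (K₁ + K₂) * ρ⁻¹ ^ 2 := by nlinarith [mul_nonneg hK₂ (sq_nonneg ρ⁻¹)]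

namespace SelfSimilarProfile

noncomputable def flux (u : ℝ → ℝ) (ρ : ℝ) : ℝ := ρ ^ 2 * (u ρ + ρ * deriv u ρ)

noncomputable def source (ν : ℝ) (η u : ℝ → ℝ) (ρ : ℝ) : ℝ :=
  (ν - 3) * (η (ρ * u ρ) - ρ * u ρ) / (ρ ^ 2 - 1)

noncomputable def integratingFactor (ν ρ : ℝ) : ℝ := (1 - (ρ ^ 2)⁻¹) ^ ((5 - ν) / 2)

structure IsSolution (ν : ℝ) (η u : ℝ → ℝ) : Prop where
  contDiffOn : ContDiffOn ℝ 2 u (Ioi 0)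
  ode : ∀ ρ ∈ Ioi (0 : ℝ), (1 - ρ ^ 2) * deriv (deriv u) ρ + ((ν - 1) / ρ - 4 * ρ) * deriv u ρ
    - 2 * u ρ + (ν - 3) / ρ ^ 3 * η (ρ * u ρ) = 0

variable {ν ρ : ℝ} {η u : ℝ → ℝ}

theorem integratingFactor_pos (hρ : 1 < ρ) : 0 < integratingFactor ν ρ :=
  rpow_pos_of_pos (one_sub_inv_sq_pos hρ) _

theorem exists_integratingFactor_le (ν : ℝ) :
    ∃ A, ∀ ρ ≥ 2, integratingFactor ν ρ ≤ A ∧ (integratingFactor ν ρ)⁻¹ ≤ A := by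
  refine ⟨max (max 1 ((3 / 4 : ℝ) ^ ((5 - ν) / 2))) (max 1 ((3 / 4 : ℝ) ^ (-((5 - ν) / 2)))),
    fun ρ hρ => ⟨?_, ?_⟩⟩
  · exact (rpow_le_max_one_rpow _ (by norm_num) (one_sub_inv_sq_mem_Icc hρ)).trans
      (le_max_left _ _)
  · have hmem := one_sub_inv_sq_mem_Icc hρ
    rw [integratingFactor, ← rpow_neg (by linarith [hmem.1])]
    exact (rpow_le_max_one_rpow _ (by norm_num) hmem).trans (le_max_right _ _)

theorem tendsto_integratingFactor (ν : ℝ) : Tendsto (integratingFactor ν) atTop (𝓝 1) := by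
  have h : Tendsto (fun ρ : ℝ => 1 - (ρ ^ 2)⁻¹) atTop (𝓝 1) := by
    simpa using tendsto_const_nhds.sub (tendsto_pow_atTop (α := ℝ) two_ne_zero).inv_tendsto_atTop
  show Tendsto (fun ρ : ℝ => (1 - (ρ ^ 2)⁻¹) ^ ((5 - ν) / 2)) atTop (𝓝 1)
  simpa using h.rpow_const (p := (5 - ν) / 2) (Or.inl one_ne_zero)

theorem hasDerivAt_integratingFactor (hρ : 1 < ρ) :
    HasDerivAt (integratingFactor ν)
      (-((ν - 5) / (ρ * (ρ ^ 2 - 1))) * integratingFactor ν ρ) ρ := by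
  have hρ₀ : ρ ≠ 0 := by positivity
  have hρ₁ : ρ ^ 2 - 1 ≠ 0 := by nlinarith
  have hbase := (one_sub_inv_sq_pos hρ).ne'
  refine ((((hasDerivAt_pow 2 ρ).inv (pow_ne_zero 2 hρ₀)).const_sub 1).rpow_const
    (Or.inl hbase)).congr_deriv ?_
  simp only [integratingFactor, Pi.inv_apply, Nat.cast_ofNat]
  rw [rpow_sub_one hbase]
  field_simp
  ring

theorem IsSolution.hasDerivAt (h : IsSolution ν η u) (hρ : 0 < ρ) :
    HasDerivAt u (deriv u ρ) ρ :=
  ((h.contDiffOn.differentiableOn two_ne_zero) ρ hρ |>.differentiableAt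
    (Ioi_mem_nhds hρ)).hasDerivAt

theorem IsSolution.contDiffOn_deriv (h : IsSolution ν η u) : ContDiffOn ℝ 1 (deriv u) (Ioi 0) :=
  h.contDiffOn.deriv_of_isOpen isOpen_Ioi (by norm_num)

theorem IsSolution.hasDerivAt_deriv (h : IsSolution ν η u) (hρ : 0 < ρ) :
    HasDerivAt (deriv u) (deriv (deriv u) ρ) ρ :=
  ((h.contDiffOn_deriv.differentiableOn one_ne_zero) ρ hρ |>.differentiableAt
    (Ioi_mem_nhds hρ)).hasDerivAt

theorem IsSolution.hasDerivAt_mul_self (h : IsSolution ν η u) (hρ : 0 < ρ) :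
    HasDerivAt (fun s => s * u s) (u ρ + ρ * deriv u ρ) ρ :=
  ((hasDerivAt_id ρ).mul (h.hasDerivAt hρ)).congr_deriv (by simp)

theorem IsSolution.hasDerivAt_flux (h : IsSolution ν η u) (hρ : 1 < ρ) :
    HasDerivAt (flux u) ((ν - 5) / (ρ * (ρ ^ 2 - 1)) * flux u ρ + source ν η u ρ) ρ := by
  have hρ₀ : 0 < ρ := by linarith
  refine ((hasDerivAt_pow 2 ρ).mul ((h.hasDerivAt hρ₀).add
    ((hasDerivAt_id ρ).mul (h.hasDerivAt_deriv hρ₀)))).congr_deriv ?_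
  have hρ₁ : ρ ^ 2 - 1 ≠ 0 := by nlinarith
  have hode := h.ode ρ hρ₀
  simp only [flux, source, Pi.add_apply, Pi.mul_apply, id]
  field_simp at hode ⊢
  linear_combination -hode

theorem IsSolution.hasDerivAt_flux_mul_integratingFactor (h : IsSolution ν η u) (hρ : 1 < ρ) :
    HasDerivAt (fun s => flux u s * integratingFactor ν s)
      (integratingFactor ν ρ * source ν η u ρ) ρ :=
  ((h.hasDerivAt_flux hρ).mul (hasDerivAt_integratingFactor hρ)).congr_deriv (by ring)

theorem abs_add_mul_deriv_le_of_abs_flux_mul_le {A X : ℝ} (hρ : 1 < ρ)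
    (hA : (integratingFactor ν ρ)⁻¹ ≤ A)
    (hX : |flux u ρ * integratingFactor ν ρ| ≤ X) :
    |u ρ + ρ * deriv u ρ| ≤ X * A * (ρ ^ 2)⁻¹ := by
  have hφ := integratingFactor_pos (ν := ν) hρ
  have hρ₂ : ρ ^ 2 ≠ 0 := by positivity
  have hX₀ := (abs_nonneg _).trans hX
  have : u ρ + ρ * deriv u ρ =
      flux u ρ * integratingFactor ν ρ * (integratingFactor ν ρ)⁻¹ * (ρ ^ 2)⁻¹ := by
    simp only [flux]
    field_simp
  rw [this, abs_mul, abs_mul, abs_of_pos (inv_pos.2 hφ), abs_of_pos (by positivity : 0 < (ρ ^ 2)⁻¹)]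
  gcongr

theorem abs_source_le {B D κ : ℝ} (hB : 0 ≤ B) (hD : 0 ≤ D) (hη : ∀ x, |η x| ≤ B * |x| ^ 3)
    (hκ : κ ≤ 1) (hρ : 2 ≤ ρ) (hu : |u ρ| ≤ D * ρ ^ (-κ)) :
    |source ν η u ρ| ≤ |ν - 3| * (B * D ^ 3 + D) * (4 / 3) * ρ ^ (1 - 3 * κ) := by
  have hρ₀ : 0 < ρ := by linarith
  set x := ρ ^ (1 - κ) with hx
  have hx₁ : 1 ≤ x := one_le_rpow (by linarith) (by linarith)
  have hw : |ρ * u ρ| ≤ D * x := by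
    rw [abs_mul, abs_of_pos hρ₀, hx, sub_eq_add_neg, rpow_add hρ₀, rpow_one, mul_left_comm]
    gcongr
  have hηw : |η (ρ * u ρ) - ρ * u ρ| ≤ (B * D ^ 3 + D) * x ^ 3 := by
    calc |η (ρ * u ρ) - ρ * u ρ| ≤ B * |ρ * u ρ| ^ 3 + |ρ * u ρ| :=
          (abs_sub _ _).trans (add_le_add_left (hη _) _)
      _ ≤ B * (D * x) ^ 3 + D * x ^ 3 := by
          gcongr
          exact hw.trans (mul_le_mul_of_nonneg_left (le_self_pow₀ hx₁ (by norm_num)) hD)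
      _ = (B * D ^ 3 + D) * x ^ 3 := by ring
  have hden : (ρ ^ 2 - 1)⁻¹ ≤ 4 / 3 * (ρ ^ 2)⁻¹ := by
    rw [← inv_inv (4 / 3 : ℝ), ← mul_inv]
    exact inv_anti₀ (by positivity) (by nlinarith)
  have hpow : x ^ 3 * (ρ ^ 2)⁻¹ = ρ ^ (1 - 3 * κ) := by
    rw [hx, ← rpow_mul_natCast hρ₀.le, ← div_eq_mul_inv, ← rpow_sub_natCast hρ₀.ne']
    congr 1
    push_cast
    ring
  have hρ₁ : 0 < ρ ^ 2 - 1 := by nlinarith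
  rw [source, abs_div, abs_mul, abs_of_pos hρ₁, div_eq_mul_inv, ← hpow]
  calc |ν - 3| * |η (ρ * u ρ) - ρ * u ρ| * (ρ ^ 2 - 1)⁻¹
      ≤ |ν - 3| * ((B * D ^ 3 + D) * x ^ 3) * (4 / 3 * (ρ ^ 2)⁻¹) := by gcongr
    _ = |ν - 3| * (B * D ^ 3 + D) * (4 / 3) * (x ^ 3 * (ρ ^ 2)⁻¹) := by ring

theorem exists_abs_integratingFactor_mul_source_le {B D κ : ℝ} (hη : ∀ x, |η x| ≤ B * |x| ^ 3)
    (hκ : κ ≤ 1) (hu : ∀ ρ ≥ 2, |u ρ| ≤ D * ρ ^ (-κ)) :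
    ∃ M, ∀ ρ ≥ 2, |integratingFactor ν ρ * source ν η u ρ| ≤ M * ρ ^ (1 - 3 * κ) := by
  have hB : 0 ≤ B := by simpa using (abs_nonneg _).trans (hη 1)
  have hD : 0 ≤ D := nonneg_of_abs_le_mul_rpow two_pos hu
  obtain ⟨A, hA⟩ := exists_integratingFactor_le ν
  refine ⟨A * (|ν - 3| * (B * D ^ 3 + D) * (4 / 3)), fun ρ hρ => ?_⟩
  have hφ := integratingFactor_pos (ν := ν) (by linarith : 1 < ρ)
  rw [abs_mul, abs_of_pos hφ, mul_assoc]
  exact mul_le_mul (hA ρ hρ).1 (abs_source_le hB hD hη hκ hρ (hu ρ hρ)) (abs_nonneg _)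
    (hφ.le.trans (hA ρ hρ).1)

theorem IsSolution.exists_tendsto_mul_self (h : IsSolution ν η u) {B D κ : ℝ}
    (hη : ∀ x, |η x| ≤ B * |x| ^ 3) (hκ₁ : 1 / 2 < κ) (hκ₂ : κ < 2 / 3)
    (hu : ∀ ρ ≥ 2, |u ρ| ≤ D * ρ ^ (-κ)) :
    (∃ L, Tendsto (fun ρ => ρ * u ρ) atTop (𝓝 L)) ∧ ∃ K, ∀ ρ ≥ 2, |u ρ| ≤ K * ρ ^ (-1 : ℝ) := by
  obtain ⟨M, hM⟩ := exists_abs_integratingFactor_mul_source_le (ν := ν) hη (by linarith) hu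
  obtain ⟨A, hA⟩ := exists_integratingFactor_le ν
  obtain ⟨K, hK⟩ := exists_abs_le_mul_rpow_of_abs_deriv_le_rpow one_le_two
    (by linarith : -1 < 1 - 3 * κ)
    (fun s hs => h.hasDerivAt_flux_mul_integratingFactor (by linarith)) hM
  have hw' : ∀ s ≥ (2 : ℝ), |u s + s * deriv u s| ≤ K * A * s ^ (-3 * κ) := by
    intro s hs
    have hs₀ : 0 < s := by linarith
    calc |u s + s * deriv u s| ≤ K * s ^ (1 - 3 * κ + 1) * A * (s ^ 2)⁻¹ :=
          abs_add_mul_deriv_le_of_abs_flux_mul_le (by linarith) (hA s hs).2 (hK s hs)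
      _ = K * A * (s ^ (1 - 3 * κ + 1) / s ^ 2) := by ring
      _ = K * A * s ^ (-3 * κ) := by
          rw [← rpow_sub_natCast hs₀.ne']
          congr 2
          push_cast
          ring
  have hw : ∀ s ≥ (2 : ℝ), HasDerivAt (fun s => s * u s) (u s + s * deriv u s) s :=
    fun s hs => h.hasDerivAt_mul_self (by linarith)
  have hr : -3 * κ < -1 := by linarith
  refine ⟨exists_tendsto_of_abs_deriv_le_rpow two_pos hr hw hw',
    |2 * u 2| + K * A * 2 ^ (-3 * κ + 1) / -(-3 * κ + 1), fun ρ hρ => ?_⟩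
  have hρ₀ : 0 < ρ := by linarith
  calc |u ρ| = |ρ * u ρ| * ρ ^ (-1 : ℝ) := by
        rw [abs_mul, abs_of_pos hρ₀, rpow_neg_one]
        field_simp
    _ ≤ _ := by gcongr; exact abs_le_of_abs_deriv_le_rpow two_pos hr hw hw' hρ

theorem IsSolution.exists_tendsto_flux (h : IsSolution ν η u) {B D : ℝ}
    (hη : ∀ x, |η x| ≤ B * |x| ^ 3) (hu : ∀ ρ ≥ 2, |u ρ| ≤ D * ρ ^ (-1 : ℝ)) :
    (∃ L, Tendsto (flux u) atTop (𝓝 L)) ∧ ∃ K, ∀ ρ ≥ 2, |u ρ + ρ * deriv u ρ| ≤ K * (ρ ^ 2)⁻¹ := by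
  obtain ⟨M, hM⟩ := exists_abs_integratingFactor_mul_source_le (ν := ν) hη le_rfl hu
  obtain ⟨A, hA⟩ := exists_integratingFactor_le ν
  have hG : ∀ s ≥ (2 : ℝ), HasDerivAt (fun s => flux u s * integratingFactor ν s)
      (integratingFactor ν s * source ν η u s) s :=
    fun s hs => h.hasDerivAt_flux_mul_integratingFactor (by linarith)
  have hr : (1 - 3 * 1 : ℝ) < -1 := by norm_num
  obtain ⟨L, hL⟩ := exists_tendsto_of_abs_deriv_le_rpow two_pos hr hG hM
  refine ⟨⟨L, ?_⟩, _, fun ρ hρ =>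
    abs_add_mul_deriv_le_of_abs_flux_mul_le (by linarith) (hA ρ hρ).2
      (abs_le_of_abs_deriv_le_rpow two_pos hr hG hM hρ)⟩
  have hφ := (tendsto_integratingFactor ν).inv₀ one_ne_zero
  have : Tendsto (fun s => flux u s * integratingFactor ν s * (integratingFactor ν s)⁻¹) atTop
      (𝓝 L) := by simpa using hL.mul hφ
  refine this.congr' ?_
  filter_upwards [eventually_gt_atTop 1] with s hs
  exact mul_inv_cancel_right₀ (integratingFactor_pos hs).ne' _

theorem IsSolution.exists_abs_le (h : IsSolution ν η u) {K₁ K₂ : ℝ}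
    (h₁ : ∀ ρ ≥ 2, |u ρ| ≤ K₁ * ρ ^ (-1 : ℝ))
    (h₂ : ∀ ρ ≥ 2, |u ρ + ρ * deriv u ρ| ≤ K₂ * (ρ ^ 2)⁻¹) :
    ∃ C > 0, ∀ ρ ≥ 1, |u ρ| ≤ C * ρ⁻¹ ∧ |deriv u ρ| ≤ C * (ρ ^ 2)⁻¹ ∧
      |u ρ + ρ * deriv u ρ| ≤ C * (ρ ^ 2)⁻¹ := by
  have hIcc : Icc (1 : ℝ) 2 ⊆ Ioi 0 := fun x hx => lt_of_lt_of_le one_pos hx.1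
  have hu := h.contDiffOn.continuousOn.mono hIcc
  have hu' := h.contDiffOn_deriv.continuousOn.mono hIcc
  have h₁' : ∀ ρ ≥ 2, |u ρ| ≤ K₁ * (ρ ^ 1)⁻¹ := fun ρ hρ => by
    simpa [rpow_neg_one] using h₁ ρ hρ
  obtain ⟨C₁, hC₁, hb₁⟩ := exists_forall_ge_one_abs_le hu h₁'
  obtain ⟨C₂, hC₂, hb₂⟩ := exists_forall_ge_one_abs_le hu' fun ρ hρ =>
    abs_le_of_abs_add_mul_le (by linarith) (by simpa using h₁' ρ hρ) (h₂ ρ hρ)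
  obtain ⟨C₃, hC₃, hb₃⟩ := exists_forall_ge_one_abs_le (hu.add (continuousOn_id.mul hu')) h₂
  refine ⟨max C₁ (max C₂ C₃), by positivity, fun ρ hρ => ⟨?_, ?_, ?_⟩⟩
  · simpa using (hb₁ ρ hρ).trans (mul_le_mul_of_nonneg_right (le_max_left C₁ _) (by positivity))
  · exact (hb₂ ρ hρ).trans (by gcongr; exact (le_max_left _ _).trans (le_max_right _ _))
  · exact (hb₃ ρ hρ).trans (by gcongr; exact (le_max_right _ _).trans (le_max_right _ _))

end SelfSimilarProfile

theorem stmt_12_general (n : ℕ)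
    (η : ℝ → ℝ) (hη : ContDiff ℝ (⊤ : ℕ∞) η)
    (h0 : η 0 = 0) (h1 : deriv η 0 = 0) (h2 : deriv (deriv η) 0 = 0)
    (B : ℝ) (hB : ∀ x : ℝ, |iteratedDeriv 3 η x| ≤ B)
    (u : ℝ → ℝ) (hu : ContDiffOn ℝ 2 u (Ioi 0))
    (hode : ∀ ρ ∈ Ioi (0:ℝ),
      (1 - ρ^2) * deriv (deriv u) ρ + (((n:ℝ) - 1)/ρ - 4*ρ) * deriv u ρ
        - 2 * u ρ + ((n:ℝ) - 3)/ρ^3 * η (ρ * u ρ) = 0)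
    (C γ : ℝ) (hC : 0 < C) (hγ : 1/2 < γ)
    (hdecay : ∀ ρ ≥ (1:ℝ), |u ρ| ≤ C * ρ ^ (-γ)) :
    (∃ L₁ : ℝ, Tendsto (fun ρ => ρ * u ρ) atTop (nhds L₁)) ∧
    (∃ L₂ : ℝ, Tendsto (fun ρ => ρ^2 * (u ρ + ρ * deriv u ρ)) atTop (nhds L₂)) ∧
    ∃ C' > (0:ℝ), ∀ ρ ≥ (1:ℝ),
      |u ρ| ≤ C' * ρ⁻¹ ∧ |deriv u ρ| ≤ C' * (ρ^2)⁻¹ ∧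
      |u ρ + ρ * deriv u ρ| ≤ C' * (ρ^2)⁻¹ := by
  have hsol : SelfSimilarProfile.IsSolution n η u := ⟨hu, hode⟩
  have hη₃ := abs_le_mul_abs_pow_three_of_iteratedDeriv_three_le
    (hη.of_le (WithTop.coe_le_coe.2 le_top)) h0 h1 h2 hB
  -- capping the rate below `2/3` avoids the borderline exponent `1 - 3κ = -1`
  have hκ : 1 / 2 < min γ (5 / 8) := lt_min hγ (by norm_num)
  have hdecay₂ : ∀ ρ ≥ (2 : ℝ), |u ρ| ≤ C * ρ ^ (-min γ (5 / 8)) := fun ρ hρ =>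
    (hdecay ρ (by linarith)).trans (by gcongr; exacts [by linarith, min_le_left _ _])
  obtain ⟨hw, K₁, hK₁⟩ := hsol.exists_tendsto_mul_self hη₃ hκ
    ((min_le_right _ _).trans_lt (by norm_num)) hdecay₂
  obtain ⟨hg, K₂, hK₂⟩ := hsol.exists_tendsto_flux hη₃ hK₁
  exact ⟨hw, hg, hsol.exists_abs_le hK₁ hK₂⟩

/-- ODE content of Proposition 3.9: a priori decay of rate γ > 1/2 at
infinity for a solution u of the n-dimensional self-similar profile equation upgrades to
the sharp decay rates ρ⁻¹ for u and ρ⁻² for u' and u + ρu', with convergence of ρ u(ρ)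
and ρ²(u(ρ) + ρ u'(ρ)) at infinity. -/
theorem stmt_12 (n : ℕ) (hn : 5 ≤ n)
    (η : ℝ → ℝ) (hη : ContDiff ℝ (⊤ : ℕ∞) η)
    (h0 : η 0 = 0) (h1 : deriv η 0 = 0) (h2 : deriv (deriv η) 0 = 0)
    (B : ℝ) (hB : ∀ x : ℝ, |iteratedDeriv 3 η x| ≤ B)
    (u : ℝ → ℝ) (hu : ContDiffOn ℝ 2 u (Ioi 0))
    (hode : ∀ ρ ∈ Ioi (0:ℝ),
      (1 - ρ^2) * deriv (deriv u) ρ + (((n:ℝ) - 1)/ρ - 4*ρ) * deriv u ρ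
        - 2 * u ρ + ((n:ℝ) - 3)/ρ^3 * η (ρ * u ρ) = 0)
    (C γ : ℝ) (hC : 0 < C) (hγ : 1/2 < γ)
    (hdecay : ∀ ρ ≥ (1:ℝ), |u ρ| ≤ C * ρ ^ (-γ)) :
    (∃ L₁ : ℝ, Tendsto (fun ρ => ρ * u ρ) atTop (nhds L₁)) ∧
    (∃ L₂ : ℝ, Tendsto (fun ρ => ρ^2 * (u ρ + ρ * deriv u ρ)) atTop (nhds L₂)) ∧
    ∃ C' > (0:ℝ), ∀ ρ ≥ (1:ℝ),
      |u ρ| ≤ C' * ρ⁻¹ ∧ |deriv u ρ| ≤ C' * (ρ^2)⁻¹ ∧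
      |u ρ + ρ * deriv u ρ| ≤ C' * (ρ^2)⁻¹ :=
  stmt_12_general n η hη h0 h1 h2 B hB u hu hode C γ hC hγ hdecay
end

section
/- Let n ≥ 5 be an integer, let f₀(ρ) := 2 arctan(ρ/√(n−4)) and define w(ρ) := 1/(ρ² + n − 4) for ρ > 0. Then 2 sin²(f₀(ρ)) = 8(n−4)ρ²/(ρ² + n − 4)² for all ρ > 0, and w satisfies the eigenvalue equation (1−ρ²) w''(ρ) + ((n−1)/ρ − 6ρ) w'(ρ) − 6 w(ρ) + (n−3)/ρ² · 2 sin²(f₀(ρ)) · w(ρ) = 0 for all ρ ∈ (0,∞). -/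
/-!
Writing `c = n - 4`, the double-angle formula gives `sin (2 arctan x) = 2x / (1 + x²)`, so with
`x = ρ / √c` the potential `2 sin² f₀(ρ)` is the rational function `8cρ² / (ρ² + c)²`. The
eigenvalue equation for `w(ρ) = 1 / (ρ² + c)` then becomes an identity between rational
functions once `w' = -2ρ / (ρ² + c)²` and `w'' = (6ρ² - 2c) / (ρ² + c)³` are substituted.
-/

open Real

theorem Real.sin_two_mul_arctan (x : ℝ) : sin (2 * arctan x) = 2 * x / (1 + x ^ 2) := by
  have h : 0 < 1 + x ^ 2 := by positivity
  rw [sin_two_mul, sin_arctan, cos_arctan]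
  field_simp
  rw [sq_sqrt h.le]

theorem Real.sin_sq_two_mul_arctan_div_sqrt {c : ℝ} (hc : 0 < c) (ρ : ℝ) :
    sin (2 * arctan (ρ / √c)) ^ 2 = 4 * c * ρ ^ 2 / (ρ ^ 2 + c) ^ 2 := by
  have hρc : 0 < ρ ^ 2 + c := by positivity
  rw [sin_two_mul_arctan]
  field_simp
  rw [sq_sqrt hc.le]
  ring

section InvSqAdd

variable {c : ℝ}

theorem hasDerivAt_one_div_sq_add (hc : 0 < c) (σ : ℝ) :
    HasDerivAt (fun σ : ℝ => 1 / (σ ^ 2 + c)) (-2 * σ / (σ ^ 2 + c) ^ 2) σ := by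
  have hne : σ ^ 2 + c ≠ 0 := by positivity
  refine ((hasDerivAt_const σ 1).div ((hasDerivAt_pow 2 σ).add_const c) hne).congr_deriv ?_
  norm_num

theorem deriv_one_div_sq_add (hc : 0 < c) :
    deriv (fun σ : ℝ => 1 / (σ ^ 2 + c)) = fun σ => -2 * σ / (σ ^ 2 + c) ^ 2 :=
  funext fun σ => (hasDerivAt_one_div_sq_add hc σ).deriv

theorem hasDerivAt_deriv_one_div_sq_add (hc : 0 < c) (σ : ℝ) :
    HasDerivAt (fun σ : ℝ => -2 * σ / (σ ^ 2 + c) ^ 2)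
      ((6 * σ ^ 2 - 2 * c) / (σ ^ 2 + c) ^ 3) σ := by
  have hne : σ ^ 2 + c ≠ 0 := by positivity
  refine (((hasDerivAt_id σ).const_mul (-2)).div
    (((hasDerivAt_pow 2 σ).add_const c).pow 2) (pow_ne_zero 2 hne)).congr_deriv ?_
  field_simp
  norm_num
  ring

theorem deriv_deriv_one_div_sq_add (hc : 0 < c) :
    deriv (deriv fun σ : ℝ => 1 / (σ ^ 2 + c)) =
      fun σ => (6 * σ ^ 2 - 2 * c) / (σ ^ 2 + c) ^ 3 := by
  rw [deriv_one_div_sq_add hc]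
  exact funext fun σ => (hasDerivAt_deriv_one_div_sq_add hc σ).deriv

theorem one_div_sq_add_eigen_eq (hc : 0 < c) {ρ : ℝ} (hρ : ρ ≠ 0) :
    (1 - ρ ^ 2) * deriv (deriv fun σ : ℝ => 1 / (σ ^ 2 + c)) ρ
      + ((c + 3) / ρ - 6 * ρ) * deriv (fun σ : ℝ => 1 / (σ ^ 2 + c)) ρ
      - 6 * (1 / (ρ ^ 2 + c))
      + (c + 1) / ρ ^ 2 * (8 * c * ρ ^ 2 / (ρ ^ 2 + c) ^ 2) * (1 / (ρ ^ 2 + c)) = 0 := by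
  have hρc : ρ ^ 2 + c ≠ 0 := by positivity
  rw [deriv_deriv_one_div_sq_add hc, deriv_one_div_sq_add hc]
  field_simp
  ring

end InvSqAdd

/-- with f₀(ρ) = 2 arctan(ρ/√(n−4)) one has
2 sin²(f₀(ρ)) = 8(n−4)ρ²/(ρ² + n − 4)², and w(ρ) = 1/(ρ² + n − 4) solves the λ = 1
eigenvalue equation of the linearization around the ground state. -/
theorem stmt_16 (n : ℕ) (hn : 5 ≤ n) :
    (∀ ρ > (0:ℝ),
      2 * Real.sin (2 * Real.arctan (ρ / Real.sqrt ((n:ℝ) - 4)))^2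
        = 8 * ((n:ℝ) - 4) * ρ^2 / (ρ^2 + (n:ℝ) - 4)^2) ∧
    (∀ ρ > (0:ℝ),
      (1 - ρ^2) * deriv (deriv (fun σ : ℝ => 1 / (σ^2 + (n:ℝ) - 4))) ρ
        + (((n:ℝ) - 1)/ρ - 6*ρ) * deriv (fun σ : ℝ => 1 / (σ^2 + (n:ℝ) - 4)) ρ
        - 6 * (1 / (ρ^2 + (n:ℝ) - 4))
        + ((n:ℝ) - 3)/ρ^2 * (2 * Real.sin (2 * Real.arctan (ρ / Real.sqrt ((n:ℝ) - 4)))^2)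
          * (1 / (ρ^2 + (n:ℝ) - 4)) = 0) := by
  set c : ℝ := (n:ℝ) - 4
  have hc : 0 < c := by
    have : (5:ℝ) ≤ n := by exact_mod_cast hn
    linarith
  have hsq_add (σ : ℝ) : σ ^ 2 + (n:ℝ) - 4 = σ ^ 2 + c := add_sub_assoc _ _ _
  have hpotential (ρ : ℝ) :
      2 * sin (2 * arctan (ρ / √c)) ^ 2 = 8 * c * ρ ^ 2 / (ρ ^ 2 + c) ^ 2 := by
    rw [sin_sq_two_mul_arctan_div_sqrt hc]
    ring
  refine ⟨fun ρ _ => by rw [hsq_add, hpotential], fun ρ hρ => ?_⟩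
  simp only [hsq_add, hpotential]
  rw [show (n:ℝ) - 1 = c + 3 by ring, show (n:ℝ) - 3 = c + 1 by ring]
  exact one_div_sq_add_eigen_eq hc hρ.ne'
end
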